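/- Let 𝒳 be a separable metrizable space with its Borel σ-algebra and 𝕏 a stochastic process on 𝒳 satisfying condition C4. Then for every p ≥ 0 and every ε > 0 there exist an integer T ≥ 1 and δ > 0 such that for every measurable set A ⊆ 𝒳 with sup_{l≥0} E[μ̂_{𝕏^l}(A)] ≤ δ, one has E[ sup_{T' ≥ T} (1/T') Σ_{t ≤ T', t ∈ 𝒯^p} 1_A(X_t) ] ≤ ε. -/

import Mathlib

open MeasureTheory Filter Set Topology

noncomputable section

variable {Ω : Type*} [MeasurableSpace Ω] {𝒳 : Type*} [MeasurableSpace 𝒳]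

/-- Average number of times `t ∈ 𝒯 ω`, `1 ≤ t ≤ T`, with `X t ω ∈ A`, divided by `T`. -/
def avgVisit (X : ℕ → Ω → 𝒳) (𝒯 : Ω → Set ℕ) (A : Set 𝒳) (T : ℕ) (ω : Ω) : ℝ :=
  (T : ℝ)⁻¹ * ∑ t ∈ Finset.Icc 1 T,
    ({s : ℕ | s ∈ 𝒯 ω ∧ X s ω ∈ A}.indicator (fun _ => (1 : ℝ)) t)

/-- Limit submeasure `μ̂` of the extended process `(X_t)_{t ∈ 𝒯}`. -/
def limitSubmeasure (X : ℕ → Ω → 𝒳) (𝒯 : Ω → Set ℕ) (A : Set 𝒳) (ω : Ω) : ℝ :=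
  Filter.limsup (fun T => avgVisit X 𝒯 A T ω) Filter.atTop

/-- Condition C1 for the extended process `(X_t)_{t ∈ 𝒯}`. -/
def SatisfiesC1 (P : Measure Ω) (X : ℕ → Ω → 𝒳) (𝒯 : Ω → Set ℕ) : Prop :=
  ∀ A : ℕ → Set 𝒳, (∀ k, MeasurableSet (A k)) → Antitone A → (⋂ k, A k) = ∅ →
    Filter.Tendsto (fun k => ∫ ω, limitSubmeasure X 𝒯 (A k) ω ∂P) Filter.atTop (nhds 0)

/-- `T_i^k = ⌊2^u (1 + v·2^{-i})⌋` where `k = u·2^i + v`, `0 ≤ v < 2^i`. -/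
def timeGrid (i k : ℕ) : ℕ :=
  ⌊(2 : ℝ) ^ (k / 2 ^ i) * (1 + ((k % 2 ^ i : ℕ) : ℝ) / (2 ^ i : ℝ))⌋₊

/-- `𝒯^i`: times of first appearance of the instance within its period at scale `i`. -/
def scaleTimes (X : ℕ → Ω → 𝒳) (i : ℕ) (ω : Ω) : Set ℕ :=
  {t | 1 ≤ t ∧ ∀ k, timeGrid i k ≤ t → t < timeGrid i (k + 1) →
    ∀ t', timeGrid i k ≤ t' → t' < t → X t' ω ≠ X t ω}

/-- Condition C4. -/
def SatisfiesC4 (P : Measure Ω) (X : ℕ → Ω → 𝒳) : Prop :=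
  ∀ A : ℕ → Set 𝒳, (∀ i, MeasurableSet (A i)) → Pairwise (Function.onFun Disjoint A) →
    Filter.Tendsto (fun i => ∫ ω, limitSubmeasure X (scaleTimes X i) (A i) ω ∂P)
      Filter.atTop (nhds 0)

/-- Supremum over `T ≥ T₀` of the average visit counts. -/
def supAvgVisit (X : ℕ → Ω → 𝒳) (𝒯 : Ω → Set ℕ) (A : Set 𝒳) (T₀ : ℕ) (ω : Ω) : ℝ :=
  ⨆ T : {T : ℕ // T₀ ≤ T}, avgVisit X 𝒯 A T ω

/-- Number of sets `A k` visited by the process up to time `T`. -/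
def distinctSetCount (X : ℕ → Ω → 𝒳) (A : ℕ → Set 𝒳) (T : ℕ) (ω : Ω) : ℕ :=
  Set.ncard {k : ℕ | ∃ t, 1 ≤ t ∧ t ≤ T ∧ X t ω ∈ A k}

/-- Condition C2. -/
def SatisfiesC2 (P : Measure Ω) (X : ℕ → Ω → 𝒳) : Prop :=
  ∀ A : ℕ → Set 𝒳, (∀ k, MeasurableSet (A k)) → Pairwise (Function.onFun Disjoint A) →
    ∀ᵐ ω ∂P, Filter.Tendsto (fun T => (distinctSetCount X A T ω : ℝ) / T)
      Filter.atTop (nhds 0)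

/-- Condition C5. -/
def SatisfiesC5 (P : Measure Ω) (X : ℕ → Ω → 𝒳) : Prop :=
  ∃ Ti : ℕ → ℕ, Monotone Ti ∧
    SatisfiesC1 P X (fun ω => ⋃ i, scaleTimes X i ω ∩ {t : ℕ | Ti i ≤ t})

/-- `N_t(x) = Σ_{1 ≤ s ≤ t} 1[X_s = x]`, the occurrence count. -/
def dupCount (X : ℕ → Ω → 𝒳) (t : ℕ) (x : 𝒳) (ω : Ω) : ℕ :=
  Set.ncard {s : ℕ | 1 ≤ s ∧ s ≤ t ∧ X s ω = x}

/-- Condition C8. -/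
def SatisfiesC8 (P : Measure Ω) (X : ℕ → Ω → 𝒳) : Prop :=
  ∃ Ψ : ℕ → ℕ, Monotone Ψ ∧ Filter.Tendsto Ψ Filter.atTop Filter.atTop ∧
    ∀ A : ℕ → Set 𝒳, (∀ i, MeasurableSet (A i)) → Antitone A → (⋂ i, A i) = ∅ →
      Filter.Tendsto (fun i => ∫ ω, Filter.limsup (fun T : ℕ => (T : ℝ)⁻¹ *
          ∑ t ∈ Finset.Icc 1 T,
            ({s : ℕ | X s ω ∈ A i ∧ dupCount X s (X s ω) ω ≤ Ψ T}.indicator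
              (fun _ => (1 : ℝ)) t)) Filter.atTop ∂P)
        Filter.atTop (nhds 0)

/-!
Suppose the bound fails for some `p` and `ε`: for every horizon `T` and every `δ > 0` there is a
set that has limit mass at most `δ` at every scale, yet expected tail average above `ε` beyond `T`
at scale `p`. Pick such sets `A n` with `δ n = ε / 2 ^ (n + 3)`, each beyond a horizon so large
that every earlier `A m` already has expected tail average below `2 δ m` at the scale assigned to
`n`; the scales `σ n ≥ p` are assigned so that each is hit infinitely often. Disjointify the `A n`
and collect the pieces of scale `i` into `B i`. For `i ≥ p` the periods of scale `i` refine those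
of scale `p`, so `𝒯^p ⊆ 𝒯^i`, and subtracting the earlier sets shows that `B i` keeps expected
tail average at least `ε / 2` beyond arbitrarily late horizons at scale `i`. Hence
`E[μ̂_{𝕏^i}(B i)] ≥ ε / 2` for all `i ≥ p`, although the `B i` are disjoint: C4 fails.
-/

lemma timeGrid_mul_add {i v : ℕ} (hv : v < 2 ^ i) (u : ℕ) :
    timeGrid i (2 ^ i * u + v) = ⌊(2 : ℝ) ^ u * (1 + (v : ℝ) / 2 ^ i)⌋₊ := by
  rw [timeGrid, Nat.mul_add_div (Nat.two_pow_pos i), Nat.div_eq_of_lt hv, add_zero,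
    Nat.mul_add_mod, Nat.mod_eq_of_lt hv]

lemma timeGrid_mono (i : ℕ) : Monotone (timeGrid i) := by
  refine monotone_nat_of_le_succ fun k => ?_
  obtain ⟨u, v, hv, rfl⟩ : ∃ u v, v < 2 ^ i ∧ k = 2 ^ i * u + v :=
    ⟨k / 2 ^ i, k % 2 ^ i, Nat.mod_lt _ (Nat.two_pow_pos i), (Nat.div_add_mod k _).symm⟩
  have h2i : (0 : ℝ) < 2 ^ i := by positivity
  rw [timeGrid_mul_add hv]
  rcases (show v + 1 ≤ 2 ^ i from hv).lt_or_eq with hv' | hv'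
  · rw [add_assoc, timeGrid_mul_add hv']
    gcongr
    simp
  · have hk : 2 ^ i * u + v + 1 = 2 ^ i * (u + 1) + 0 := by lia
    rw [hk, timeGrid_mul_add (Nat.two_pow_pos i)]
    refine Nat.floor_le_floor ?_
    have hv1 : (v : ℝ) / 2 ^ i ≤ 1 := (div_le_one h2i).2 (by exact_mod_cast hv.le)
    rw [Nat.cast_zero, zero_div, add_zero, mul_one, pow_succ]
    exact mul_le_mul_of_nonneg_left (by linarith) (by positivity)

lemma timeGrid_add_pow_mul (p j k : ℕ) : timeGrid (p + j) (2 ^ j * k) = timeGrid p k := by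
  obtain ⟨u, v, hv, rfl⟩ : ∃ u v, v < 2 ^ p ∧ k = 2 ^ p * u + v :=
    ⟨k / 2 ^ p, k % 2 ^ p, Nat.mod_lt _ (Nat.two_pow_pos p), (Nat.div_add_mod k _).symm⟩
  have hv' : 2 ^ j * v < 2 ^ (p + j) := by
    rw [pow_add, mul_comm (2 ^ p)]
    exact Nat.mul_lt_mul_of_pos_left hv (Nat.two_pow_pos j)
  rw [mul_add, ← mul_assoc, ← pow_add, add_comm j, timeGrid_mul_add hv', timeGrid_mul_add hv]
  push_cast
  rw [pow_add, mul_comm ((2 : ℝ) ^ p), mul_div_mul_left _ _ (by positivity)]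

lemma exists_timeGrid_le_of_le {p i : ℕ} (hpi : p ≤ i) (k : ℕ) :
    ∃ k', timeGrid p k' ≤ timeGrid i k ∧ timeGrid i (k + 1) ≤ timeGrid p (k' + 1) := by
  obtain ⟨j, rfl⟩ := Nat.exists_eq_add_of_le hpi
  refine ⟨k / 2 ^ j, ?_, ?_⟩ <;> rw [← timeGrid_add_pow_mul p j] <;> apply timeGrid_mono
  · exact Nat.mul_div_le k _
  · have := Nat.lt_mul_div_succ k (Nat.two_pow_pos j)
    omega

omit [MeasurableSpace Ω] [MeasurableSpace 𝒳] in
lemma scaleTimes_mono (X : ℕ → Ω → 𝒳) (ω : Ω) : Monotone fun i => scaleTimes X i ω := by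
  intro p i hpi t ⟨ht1, ht⟩
  refine ⟨ht1, fun k hk hk' t' ht' ht't => ?_⟩
  obtain ⟨k', hk'l, hk'u⟩ := exists_timeGrid_le_of_le hpi k
  exact ht k' (hk'l.trans hk) (hk'.trans_le hk'u) t' (hk'l.trans ht') ht't

section Averages

omit [MeasurableSpace Ω] [MeasurableSpace 𝒳]

variable {X : ℕ → Ω → 𝒳} {𝒯 𝒯' : Ω → Set ℕ} {A B : Set 𝒳} {T T₀ : ℕ} {ω : Ω}

lemma avgVisit_nonneg : 0 ≤ avgVisit X 𝒯 A T ω :=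
  mul_nonneg (by positivity) (Finset.sum_nonneg fun _ _ => Set.indicator_nonneg (by simp) _)

lemma avgVisit_le_one : avgVisit X 𝒯 A T ω ≤ 1 := by
  rcases Nat.eq_zero_or_pos T with rfl | hT
  · simp [avgVisit]
  calc avgVisit X 𝒯 A T ω ≤ (T : ℝ)⁻¹ * ∑ _t ∈ Finset.Icc 1 T, (1 : ℝ) := by
        unfold avgVisit
        gcongr with t
        exact Set.indicator_le_self' (by simp) t
    _ = 1 := by simp [hT.ne']

lemma avgVisit_mono (h𝒯 : 𝒯 ω ⊆ 𝒯' ω) (hAB : A ⊆ B) :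
    avgVisit X 𝒯 A T ω ≤ avgVisit X 𝒯' B T ω := by
  unfold avgVisit
  gcongr

lemma avgVisit_union_le : avgVisit X 𝒯 (A ∪ B) T ω ≤ avgVisit X 𝒯 A T ω + avgVisit X 𝒯 B T ω := by
  unfold avgVisit
  rw [← mul_add, ← Finset.sum_add_distrib]
  gcongr with t
  have hunion : {s | s ∈ 𝒯 ω ∧ X s ω ∈ A ∪ B}
      = {s | s ∈ 𝒯 ω ∧ X s ω ∈ A} ∪ {s | s ∈ 𝒯 ω ∧ X s ω ∈ B} := by
    ext s; simp [and_or_left]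
  rw [hunion, ← Pi.add_apply, ← Set.indicator_union_add_inter]
  exact le_add_of_nonneg_right (Set.indicator_nonneg (by simp) t)

lemma avgVisit_finset_sup_le {ι : Type*} (s : Finset ι) (f : ι → Set 𝒳) :
    avgVisit X 𝒯 (s.sup f) T ω ≤ ∑ i ∈ s, avgVisit X 𝒯 (f i) T ω := by
  induction s using Finset.cons_induction with
  | empty => simp [avgVisit]
  | cons i s hi ih =>
    rw [Finset.sup_cons, Finset.sum_cons]
    exact avgVisit_union_le.trans (by gcongr)

lemma avgVisit_le_disjointed_add_sum (S : ℕ → Set 𝒳) (n : ℕ) :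
    avgVisit X 𝒯 (S n) T ω
      ≤ avgVisit X 𝒯 (disjointed S n) T ω + ∑ m ∈ Finset.Iio n, avgVisit X 𝒯 (S m) T ω := by
  have hS : S n ⊆ disjointed S n ∪ (Finset.Iio n).sup S := by
    rw [disjointed_apply, Set.sdiff_union_self]
    exact subset_union_left
  refine (avgVisit_mono subset_rfl hS).trans (avgVisit_union_le.trans ?_)
  gcongr
  exact avgVisit_finset_sup_le _ _

lemma bddAbove_range_avgVisit {ι : Sort*} (g : ι → ℕ) :
    BddAbove (Set.range fun i => avgVisit X 𝒯 A (g i) ω) :=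
  ⟨1, by rintro _ ⟨i, rfl⟩; exact avgVisit_le_one⟩

lemma avgVisit_le_supAvgVisit (h : T₀ ≤ T) : avgVisit X 𝒯 A T ω ≤ supAvgVisit X 𝒯 A T₀ ω :=
  le_ciSup (f := fun T : {T // T₀ ≤ T} => avgVisit X 𝒯 A T ω) (bddAbove_range_avgVisit _) ⟨T, h⟩

lemma supAvgVisit_nonneg : 0 ≤ supAvgVisit X 𝒯 A T₀ ω :=
  Real.iSup_nonneg fun _ => avgVisit_nonneg

lemma supAvgVisit_le_one : supAvgVisit X 𝒯 A T₀ ω ≤ 1 :=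
  Real.iSup_le (fun _ => avgVisit_le_one) zero_le_one

lemma antitone_supAvgVisit : Antitone fun T₀ => supAvgVisit X 𝒯 A T₀ ω :=
  fun _ _ h => Real.iSup_le (fun T => avgVisit_le_supAvgVisit (h.trans T.2)) supAvgVisit_nonneg

lemma limitSubmeasure_eq_iInf_supAvgVisit :
    limitSubmeasure X 𝒯 A ω = ⨅ T₀, supAvgVisit X 𝒯 A T₀ ω := by
  have hbdd : BddBelow (Set.range fun T₀ => supAvgVisit X 𝒯 A T₀ ω) :=
    ⟨0, by rintro _ ⟨T₀, rfl⟩; exact supAvgVisit_nonneg⟩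
  refine le_antisymm (le_ciInf fun T₀ => ?_) (le_of_forall_gt_imp_ge_of_dense fun b hb => ?_)
  · refine limsup_le_of_le (isBoundedUnder_of ⟨0, fun _ => avgVisit_nonneg⟩).isCoboundedUnder_le ?_
    filter_upwards [eventually_ge_atTop T₀] with T hT
    exact avgVisit_le_supAvgVisit hT
  · obtain ⟨T₀, hT₀⟩ := eventually_atTop.1
      (eventually_lt_of_limsup_lt hb (isBoundedUnder_of ⟨1, fun _ => avgVisit_le_one⟩))
    exact ciInf_le_of_le hbdd T₀ (Real.iSup_le (fun T => (hT₀ T T.2).le)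
      (avgVisit_nonneg.trans (hT₀ T₀ le_rfl).le))

lemma tendsto_supAvgVisit_limitSubmeasure :
    Tendsto (fun T₀ => supAvgVisit X 𝒯 A T₀ ω) atTop (𝓝 (limitSubmeasure X 𝒯 A ω)) := by
  rw [limitSubmeasure_eq_iInf_supAvgVisit]
  exact tendsto_atTop_ciInf antitone_supAvgVisit
    ⟨0, by rintro _ ⟨T₀, rfl⟩; exact supAvgVisit_nonneg⟩

lemma limitSubmeasure_nonneg : 0 ≤ limitSubmeasure X 𝒯 A ω :=
  ge_of_tendsto' tendsto_supAvgVisit_limitSubmeasure fun _ => supAvgVisit_nonneg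

lemma limitSubmeasure_le_one : limitSubmeasure X 𝒯 A ω ≤ 1 :=
  le_of_tendsto' tendsto_supAvgVisit_limitSubmeasure fun _ => supAvgVisit_le_one

lemma supAvgVisit_le_disjointed_add_sum (S : ℕ → Set 𝒳) {n : ℕ} (h𝒯 : 𝒯 ω ⊆ 𝒯' ω)
    (hT : T₀ ≤ T) (hB : disjointed S n ⊆ B) :
    supAvgVisit X 𝒯 (S n) T ω
      ≤ supAvgVisit X 𝒯' B T₀ ω + ∑ m ∈ Finset.Iio n, supAvgVisit X 𝒯' (S m) T ω := by
  refine Real.iSup_le (fun T' => ?_)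
    (add_nonneg supAvgVisit_nonneg (Finset.sum_nonneg fun _ _ => supAvgVisit_nonneg))
  calc avgVisit X 𝒯 (S n) T' ω ≤ avgVisit X 𝒯' (S n) T' ω := avgVisit_mono h𝒯 subset_rfl
    _ ≤ avgVisit X 𝒯' (disjointed S n) T' ω + ∑ m ∈ Finset.Iio n, avgVisit X 𝒯' (S m) T' ω :=
      avgVisit_le_disjointed_add_sum S n
    _ ≤ _ := by
      gcongr with m
      · exact (avgVisit_mono subset_rfl hB).trans (avgVisit_le_supAvgVisit (hT.trans T'.2))
      · exact avgVisit_le_supAvgVisit T'.2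

end Averages

section Integrals

variable {X : ℕ → Ω → 𝒳} {𝒯 : Ω → Set ℕ} {A : Set 𝒳}

lemma measurableSet_mem_scaleTimes [MeasurableEq 𝒳] (hX : ∀ t, Measurable (X t)) (i t : ℕ) :
    MeasurableSet {ω | t ∈ scaleTimes X i ω} := by
  refine measurableSet_setOfPred.2 ?_
  unfold scaleTimes
  fun_prop

variable (h𝒯 : ∀ t, MeasurableSet {ω | t ∈ 𝒯 ω}) (hX : ∀ t, Measurable (X t))
  (hA : MeasurableSet A)
include h𝒯 hX hA

lemma measurable_avgVisit (T : ℕ) : Measurable (avgVisit X 𝒯 A T) := by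
  refine (Finset.measurable_sum _ fun t _ => ?_).const_mul _
  exact measurable_const.indicator ((h𝒯 t).inter (hX t hA))

lemma measurable_supAvgVisit (T₀ : ℕ) : Measurable (supAvgVisit X 𝒯 A T₀) :=
  Measurable.iSup fun T => measurable_avgVisit h𝒯 hX hA T

variable {P : Measure Ω} [IsFiniteMeasure P]

lemma integrable_supAvgVisit (T₀ : ℕ) : Integrable (supAvgVisit X 𝒯 A T₀) P :=
  .of_bound (measurable_supAvgVisit h𝒯 hX hA T₀).aestronglyMeasurable 1 <| .of_forall fun _ => by
    rw [Real.norm_of_nonneg supAvgVisit_nonneg]; exact supAvgVisit_le_one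

lemma antitone_integral_supAvgVisit : Antitone fun T₀ => ∫ ω, supAvgVisit X 𝒯 A T₀ ω ∂P :=
  fun _ _ h => integral_mono (integrable_supAvgVisit h𝒯 hX hA _)
    (integrable_supAvgVisit h𝒯 hX hA _) fun _ => antitone_supAvgVisit h

lemma tendsto_integral_supAvgVisit :
    Tendsto (fun T₀ => ∫ ω, supAvgVisit X 𝒯 A T₀ ω ∂P) atTop
      (𝓝 (∫ ω, limitSubmeasure X 𝒯 A ω ∂P)) := by
  refine tendsto_integral_of_dominated_convergence (fun _ => 1)
    (fun T₀ => (measurable_supAvgVisit h𝒯 hX hA T₀).aestronglyMeasurable) (integrable_const 1)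
    (fun T₀ => .of_forall fun ω => ?_) (.of_forall fun ω => tendsto_supAvgVisit_limitSubmeasure)
  rw [Real.norm_of_nonneg supAvgVisit_nonneg]
  exact supAvgVisit_le_one

end Integrals

lemma exists_seq_forall_lt_ge (g : ℕ → ℕ → ℕ → ℕ) :
    ∃ H : ℕ → ℕ, (∀ n, n < H n) ∧ ∀ m n, m < n → g m (H m) n ≤ H n := by
  let H : ℕ → ℕ :=
    Nat.strongRec fun n H' => n + 1 + Finset.univ.sup fun m : Fin n => g m (H' m m.2) n
  have hH : ∀ n, H n = n + 1 + Finset.univ.sup fun m : Fin n => g m (H m) n :=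
    fun n => Nat.strongRec_eq _ n
  refine ⟨H, fun n => by rw [hH]; omega, fun m n hmn => ?_⟩
  rw [hH n]
  exact (Finset.le_sup (f := fun m : Fin n => g m (H m) n) (Finset.mem_univ ⟨m, hmn⟩)).trans
    (Nat.le_add_left _ _)

lemma pairwise_disjoint_iUnion_fiber {α ι κ : Type*} {f : ι → Set α}
    (hf : Pairwise (Function.onFun Disjoint f)) (σ : ι → κ) :
    Pairwise (Function.onFun Disjoint fun k => ⋃ i, ⋃ (_ : σ i = k), f i) := by
  intro k l hkl
  simp only [Function.onFun, Set.disjoint_iUnion_left, Set.disjoint_iUnion_right]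
  rintro i rfl j rfl
  exact hf fun hij => hkl (congrArg σ hij)

lemma sum_Iio_div_two_pow_le {ε : ℝ} (hε : 0 ≤ ε) (n : ℕ) :
    ∑ m ∈ Finset.Iio n, ε / 2 ^ (m + 2) ≤ ε / 2 := by
  have h := sum_geometric_two_le n
  rw [← Nat.Iio_eq_range] at h
  calc ∑ m ∈ Finset.Iio n, ε / 2 ^ (m + 2) = ε / 4 * ∑ m ∈ Finset.Iio n, (1 / 2 : ℝ) ^ m := by
        rw [Finset.mul_sum]
        refine Finset.sum_congr rfl fun m _ => ?_
        rw [pow_add, one_div_pow]; ring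
    _ ≤ ε / 4 * 2 := by gcongr
    _ = ε / 2 := by ring

omit [MeasurableSpace 𝒳] in
lemma integral_limitSubmeasure_le_one {P : Measure Ω} [IsProbabilityMeasure P]
    (X : ℕ → Ω → 𝒳) (𝒯 : Ω → Set ℕ) (A : Set 𝒳) :
    ∫ ω, limitSubmeasure X 𝒯 A ω ∂P ≤ 1 := by
  simpa using integral_mono_of_nonneg (μ := P) (.of_forall fun _ => limitSubmeasure_nonneg)
    (integrable_const (1 : ℝ)) (.of_forall fun _ => limitSubmeasure_le_one)

lemma integral_supAvgVisit_le_disjointed_add_sum {P : Measure Ω} [IsFiniteMeasure P]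
    {X : ℕ → Ω → 𝒳} {𝒯 𝒯' : Ω → Set ℕ} {S : ℕ → Set 𝒳} {B : Set 𝒳} {T T₀ n : ℕ}
    (hX : ∀ t, Measurable (X t)) (h𝒯 : ∀ t, MeasurableSet {ω | t ∈ 𝒯 ω})
    (h𝒯' : ∀ t, MeasurableSet {ω | t ∈ 𝒯' ω}) (hsub : ∀ ω, 𝒯 ω ⊆ 𝒯' ω)
    (hS : ∀ n, MeasurableSet (S n)) (hB : MeasurableSet B) (hT : T₀ ≤ T)
    (hSB : disjointed S n ⊆ B) :
    ∫ ω, supAvgVisit X 𝒯 (S n) T ω ∂P ≤ ∫ ω, supAvgVisit X 𝒯' B T₀ ω ∂P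
      + ∑ m ∈ Finset.Iio n, ∫ ω, supAvgVisit X 𝒯' (S m) T ω ∂P := by
  have hint := fun m => integrable_supAvgVisit (P := P) h𝒯' hX (hS m) T
  rw [← integral_finsetSum _ fun m _ => hint m,
    ← integral_add (integrable_supAvgVisit h𝒯' hX hB T₀) (integrable_finsetSum _ fun m _ => hint m)]
  exact integral_mono (integrable_supAvgVisit h𝒯 hX (hS n) T)
    ((integrable_supAvgVisit h𝒯' hX hB T₀).add (integrable_finsetSum _ fun m _ => hint m))
    fun ω => supAvgVisit_le_disjointed_add_sum S (hsub ω) hT hSB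

theorem not_satisfiesC4_of_forall_exists [MeasurableEq 𝒳] {P : Measure Ω} [IsFiniteMeasure P]
    {X : ℕ → Ω → 𝒳} (hX : ∀ t, Measurable (X t)) {p : ℕ} {ε : ℝ} (hε : 0 < ε)
    (hbad : ∀ T, 1 ≤ T → ∀ δ, 0 < δ → ∃ A, MeasurableSet A ∧
      (∀ l, ∫ ω, limitSubmeasure X (scaleTimes X l) A ω ∂P ≤ δ) ∧
      ε < ∫ ω, supAvgVisit X (scaleTimes X p) A T ω ∂P) :
    ¬ SatisfiesC4 P X := by
  intro hC4
  have hmeas := measurableSet_mem_scaleTimes hX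
  choose A hA hAl hAbig using fun T m =>
    hbad (T + 1) (Nat.le_add_left 1 T) (ε / 2 ^ (m + 3)) (by positivity)
  choose thr hthr using fun T m l =>
    ((tendsto_integral_supAvgVisit (P := P) (hmeas l) hX (hA T m)).eventually_lt_const
      ((hAl T m l).trans_lt (by gcongr <;> norm_num) : _ < ε / 2 ^ (m + 2))).exists
  let σ : ℕ → ℕ := fun n => p + (Nat.unpair n).1
  obtain ⟨H, hH, hHthr⟩ := exists_seq_forall_lt_ge fun m T n => thr T m (σ n)
  let S : ℕ → Set 𝒳 := fun n => A (H n) n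
  let B : ℕ → Set 𝒳 := fun i => ⋃ n, ⋃ (_ : σ n = i), disjointed S n
  have hS : ∀ n, MeasurableSet (S n) := fun n => hA _ _
  have hB : ∀ i, MeasurableSet (B i) := fun i =>
    .iUnion fun n => .iUnion fun _ => .disjointed hS n
  have hlow : ∀ i, p ≤ i → ε / 2 ≤ ∫ ω, limitSubmeasure X (scaleTimes X i) (B i) ω ∂P := by
    intro i hpi
    refine ge_of_tendsto (tendsto_integral_supAvgVisit (hmeas i) hX (hB i))
      (.of_forall fun T₀ => ?_)
    let n := Nat.pair (i - p) T₀
    have hσn : σ n = i := by simp only [σ, n, Nat.unpair_pair]; omega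
    have hT₀ : T₀ ≤ H n + 1 := (Nat.right_le_pair _ _).trans (hH n).le |>.trans (H n).le_succ
    have hbig : ε < ∫ ω, supAvgVisit X (scaleTimes X p) (S n) (H n + 1) ω ∂P := hAbig (H n) n
    have hsmall : ∑ m ∈ Finset.Iio n,
        ∫ ω, supAvgVisit X (scaleTimes X i) (S m) (H n + 1) ω ∂P ≤ ε / 2 := by
      refine (Finset.sum_le_sum fun m hm => ?_).trans (sum_Iio_div_two_pow_le hε.le n)
      have hHm := hHthr m n (Finset.mem_Iio.1 hm)
      rw [hσn] at hHm
      exact (antitone_integral_supAvgVisit (hmeas i) hX (hS m) (hHm.trans (H n).le_succ)).trans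
        (hthr _ _ _).le
    have hsplit := integral_supAvgVisit_le_disjointed_add_sum (P := P) hX (hmeas p) (hmeas i)
      (fun ω => scaleTimes_mono X ω hpi) hS (hB i) hT₀
      (Set.subset_iUnion₂_of_subset n hσn subset_rfl)
    linarith
  obtain ⟨i, hi⟩ := eventually_atTop.1 <|
    (hC4 B hB (pairwise_disjoint_iUnion_fiber (disjoint_disjointed S) σ)).eventually_lt_const
      (half_pos hε)
  exact (hi (max i p) (le_max_left _ _)).not_ge (hlow _ (le_max_right _ _))

/-- for C4 processes, uniform deviation bounds at each scale p, with
smallness measured uniformly over all scales l. -/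
theorem stmt12 [TopologicalSpace 𝒳] [TopologicalSpace.SeparableSpace 𝒳]
    [TopologicalSpace.MetrizableSpace 𝒳] [BorelSpace 𝒳]
    (P : Measure Ω) [IsProbabilityMeasure P]
    (X : ℕ → Ω → 𝒳) (hX : ∀ t, Measurable (X t))
    (hC4 : SatisfiesC4 P X) :
    ∀ (p : ℕ) (ε : ℝ), 0 < ε → ∃ T : ℕ, 1 ≤ T ∧ ∃ δ : ℝ, 0 < δ ∧
      ∀ A : Set 𝒳, MeasurableSet A →
        (⨆ l : ℕ, ∫ ω, limitSubmeasure X (scaleTimes X l) A ω ∂P) ≤ δ →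
        (∫ ω, supAvgVisit X (scaleTimes X p) A T ω ∂P) ≤ ε := by
  have : SecondCountableTopology 𝒳 := by
    let := TopologicalSpace.metrizableSpaceMetric 𝒳
    exact UniformSpace.secondCountable_of_separable 𝒳
  intro p ε hε
  by_contra! hbad
  refine not_satisfiesC4_of_forall_exists (p := p) hX hε (fun T hT δ hδ => ?_) hC4
  obtain ⟨A, hA, hsup, hbig⟩ := hbad T hT δ hδ
  refine ⟨A, hA, fun l => (le_ciSup ?_ l).trans hsup, hbig⟩
  exact ⟨1, by rintro _ ⟨l, rfl⟩; exact integral_limitSubmeasure_le_one X _ A⟩
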